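/- arXiv:2203.01635 — 4 statements merged into one kernel-verified Lean document; each statement's English description precedes it below -/
import Mathlib

section
/- Let A be a symmetric invertible n×n real matrix, v ∈ ℝⁿ, u ∈ ℝ, and B = [[A, v],[vᵀ, u]]. Let a_1,…,a_C ∈ ℝⁿ and b_1,…,b_C ∈ ℝ, and define t_R = Σ_{i=1}^C a_iᵀ A⁻¹ a_i and t_{R,f} = Σ_{i=1}^C (a_i; b_i)ᵀ B⁻¹ (a_i; b_i), where (a_i; b_i) ∈ ℝ^{n+1} is a_i with b_i appended. If u − vᵀ A⁻¹ v > 0, then t_{R,f} ≥ t_R. -/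
/-!
Inverting `B` blockwise through the Schur complement `s = u - vᵀA⁻¹v` of `A` gives, for every
`x = (a; b)`,
  `xᵀ B⁻¹ x = aᵀ A⁻¹ a + (b - vᵀ A⁻¹ a)² / s`,
so when `s > 0` every summand of `t_{R,f}` dominates the corresponding summand of `t_R`.
-/

open Matrix

section

variable {m n α : Type*} [Fintype m] [Fintype n] [DecidableEq m] [DecidableEq n] [CommRing α]

theorem dotProduct_invOf_fromBlocks₁₁_mulVec (A : Matrix m m α) (B : Matrix m n α)
    (C : Matrix n m α) (D : Matrix n n α) [Invertible A] [Invertible (D - C * ⅟A * B)]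
    [Invertible (fromBlocks A B C D)] (x : m → α) (y : n → α) :
    Sum.elim x y ⬝ᵥ (⅟(fromBlocks A B C D) *ᵥ Sum.elim x y) =
      x ⬝ᵥ (⅟A *ᵥ x) +
        (y - x ᵥ* ⅟A ᵥ* B) ⬝ᵥ (⅟(D - C * ⅟A * B) *ᵥ (y - C *ᵥ ⅟A *ᵥ x)) := by
  rw [invOf_fromBlocks₁₁_eq, fromBlocks_mulVec, sumElim_dotProduct_sumElim]
  simp only [Sum.elim_comp_inl, Sum.elim_comp_inr, add_mulVec, neg_mulVec, ← mulVec_mulVec,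
    mulVec_sub, dotProduct_add, dotProduct_neg, dotProduct_sub, sub_dotProduct, dotProduct_mulVec,
    sub_vecMul]
  ring

end

theorem dotProduct_inv_fromBlocks_replicateCol_mulVec {m K : Type*} [Fintype m] [DecidableEq m]
    [Field K] {A : Matrix m m K} (hA : A.IsSymm) (hdet : IsUnit A.det) (v : m → K) (u : K)
    (hs : u - v ⬝ᵥ (A⁻¹ *ᵥ v) ≠ 0) (x : m → K) (y : K) :
    Sum.elim x (fun _ => y) ⬝ᵥ
        ((fromBlocks A (replicateCol Unit v) (replicateRow Unit v) (of fun _ _ => u))⁻¹ *ᵥ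
          Sum.elim x (fun _ => y)) =
      x ⬝ᵥ (A⁻¹ *ᵥ x) + (y - v ⬝ᵥ (A⁻¹ *ᵥ x)) ^ 2 / (u - v ⬝ᵥ (A⁻¹ *ᵥ v)) := by
  let _ := A.invertibleOfIsUnitDet hdet
  have hschur : of (fun _ _ => u) - replicateRow Unit v * A⁻¹ * replicateCol Unit v =
      of fun _ _ => u - v ⬝ᵥ (A⁻¹ *ᵥ v) := by
    rw [← replicateRow_vecMul, replicateRow_mul_replicateCol, ← dotProduct_mulVec]
    rfl
  let _ : Invertible (of (fun _ _ => u) - replicateRow Unit v * ⅟A * replicateCol Unit v) :=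
    invertibleOfIsUnitDet _ (by rw [invOf_eq_nonsing_inv, hschur, det_unique]; exact hs.isUnit)
  let _ := fromBlocks₁₁Invertible A (replicateCol Unit v) (replicateRow Unit v) (of fun _ _ => u)
  have hsymm : x ᵥ* A⁻¹ = A⁻¹ *ᵥ x := by rw [← hA.inv.eq, vecMul_transpose, hA.inv.eq]
  rw [← invOf_eq_nonsing_inv, dotProduct_invOf_fromBlocks₁₁_mulVec]
  simp only [invOf_eq_nonsing_inv]
  rw [hsymm, hschur, inv_subsingleton (of _), replicateRow_mulVec_eq_const,
    mulVec_replicateCol_eq_const, dotProduct_comm (A⁻¹ *ᵥ x)]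
  simp only [dotProduct, Finset.univ_unique, PUnit.default_eq_unit, Pi.sub_apply, Function.const,
    of_apply, Ring.inverse_eq_inv, diagonal_const_mulVec, Pi.smul_apply, smul_eq_mul,
    Finset.sum_const, Finset.card_singleton, one_smul, add_right_inj]
  ring

theorem trace_criterion_increase_of_schur_pos (n C : ℕ)
    (A : Matrix (Fin n) (Fin n) ℝ) (hAsymm : A.IsSymm) (hA : IsUnit A.det)
    (v : Fin n → ℝ) (u : ℝ)
    (B : Matrix (Fin n ⊕ Unit) (Fin n ⊕ Unit) ℝ)
    (hB : B = fromBlocks A (replicateCol Unit v) (replicateRow Unit v) (of fun _ _ => u))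
    (a : Fin C → (Fin n → ℝ)) (b : Fin C → ℝ)
    (tR tRf : ℝ)
    (htR : tR = ∑ i, a i ⬝ᵥ (A⁻¹ *ᵥ a i))
    (htRf : tRf = ∑ i, (Sum.elim (a i) (fun _ => b i)) ⬝ᵥ
        (B⁻¹ *ᵥ (Sum.elim (a i) (fun _ => b i))))
    (hschur : 0 < u - v ⬝ᵥ (A⁻¹ *ᵥ v)) :
    tR ≤ tRf := by
  subst hB htR htRf
  refine Finset.sum_le_sum fun i _ => ?_
  rw [dotProduct_inv_fromBlocks_replicateCol_mulVec hAsymm hA v u hschur.ne']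
  exact le_add_of_nonneg_right (div_nonneg (sq_nonneg _) hschur.le)
end

section
/- Let A be a symmetric invertible n×n real matrix, v ∈ ℝⁿ, u ∈ ℝ, and B = [[A, v],[vᵀ, u]]. Let a_1,…,a_C ∈ ℝⁿ and b_1,…,b_C ∈ ℝ, and define t_R = Σ_{i=1}^C a_iᵀ A⁻¹ a_i and t_{R,f} = Σ_{i=1}^C (a_i; b_i)ᵀ B⁻¹ (a_i; b_i), where (a_i; b_i) ∈ ℝ^{n+1} is a_i with b_i appended. If u − vᵀ A⁻¹ v < 0, then t_{R,f} ≤ t_R; moreover, if in addition there exists an index i with a_iᵀ A⁻¹ v ≠ b_i, then t_{R,f} < t_R. -/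
/-!
Eliminating the last coordinate of the bordered matrix `B` with the Schur complement
`s = u - vᵀA⁻¹v` splits its inverse quadratic form:
`(x; y)ᵀ B⁻¹ (x; y) = xᵀA⁻¹x + s⁻¹ (xᵀA⁻¹v - y)²`.
Summing over the classes, `t_{R,f} = t_R + s⁻¹ Σᵢ (aᵢᵀA⁻¹v - bᵢ)²`, and `s⁻¹ < 0`.
-/

namespace Matrix

variable {m n α : Type*} [Fintype m] [Fintype n] [DecidableEq m] [DecidableEq n]

section CommRing

variable [CommRing α]

omit [DecidableEq m] in
theorem IsSymm.dotProduct_mulVec_comm {A : Matrix m m α} (hA : A.IsSymm) (x y : m → α) :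
    x ⬝ᵥ (A *ᵥ y) = y ⬝ᵥ (A *ᵥ x) := by
  rw [dotProduct_mulVec, ← mulVec_transpose, hA.eq, dotProduct_comm]

theorem inv_fromBlocks_mulVec_sumElim {A : Matrix m m α} {B : Matrix m n α} {C : Matrix n m α}
    {D : Matrix n n α} (hA : IsUnit A.det) (hS : IsUnit (D - C * A⁻¹ * B).det)
    (x : m → α) (y : n → α) :
    (fromBlocks A B C D)⁻¹ *ᵥ Sum.elim x y =
      Sum.elim (A⁻¹ *ᵥ (x - B *ᵥ ((D - C * A⁻¹ * B)⁻¹ *ᵥ (y - C *ᵥ (A⁻¹ *ᵥ x)))))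
        ((D - C * A⁻¹ * B)⁻¹ *ᵥ (y - C *ᵥ (A⁻¹ *ᵥ x))) := by
  let := A.invertibleOfIsUnitDet hA
  let := (D - C * ⅟A * B).invertibleOfIsUnitDet (by simpa [invOf_eq_nonsing_inv] using hS)
  let := fromBlocks₁₁Invertible A B C D
  rw [← invOf_eq_nonsing_inv, invOf_fromBlocks₁₁_eq, fromBlocks_mulVec]
  simp only [invOf_eq_nonsing_inv, Sum.elim_comp_inl, Sum.elim_comp_inr, Matrix.add_mulVec,
    Matrix.neg_mulVec, ← Matrix.mulVec_mulVec, Matrix.mulVec_sub]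
  congr 1 <;> abel

theorem sumElim_dotProduct_inv_fromBlocks_mulVec {A : Matrix m m α} {B : Matrix m n α}
    {D : Matrix n n α} (hAsymm : A.IsSymm) (hA : IsUnit A.det)
    (hS : IsUnit (D - Bᵀ * A⁻¹ * B).det) (x : m → α) (y : n → α) :
    Sum.elim x y ⬝ᵥ ((fromBlocks A B Bᵀ D)⁻¹ *ᵥ Sum.elim x y) =
      x ⬝ᵥ (A⁻¹ *ᵥ x) + (y - Bᵀ *ᵥ (A⁻¹ *ᵥ x)) ⬝ᵥ
        ((D - Bᵀ * A⁻¹ * B)⁻¹ *ᵥ (y - Bᵀ *ᵥ (A⁻¹ *ᵥ x))) := by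
  have hcross (z : n → α) : x ⬝ᵥ (A⁻¹ *ᵥ (B *ᵥ z)) = (Bᵀ *ᵥ (A⁻¹ *ᵥ x)) ⬝ᵥ z := by
    rw [dotProduct_mulVec, dotProduct_mulVec, mulVec_transpose,
      ← mulVec_transpose A⁻¹, transpose_nonsing_inv, hAsymm.eq]
  rw [inv_fromBlocks_mulVec_sumElim hA hS, sumElim_dotProduct_sumElim, mulVec_sub, dotProduct_sub,
    hcross, sub_dotProduct]
  abel

end CommRing

theorem sumElim_dotProduct_inv_fromBlocks_replicateCol_mulVec [Field α] {A : Matrix m m α}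
    (hAsymm : A.IsSymm) (hA : IsUnit A.det) (v : m → α) (u : α) (hs : u - v ⬝ᵥ (A⁻¹ *ᵥ v) ≠ 0)
    (x : m → α) (y : α) :
    Sum.elim x (fun _ => y) ⬝ᵥ
        ((fromBlocks A (replicateCol Unit v) (replicateRow Unit v) (of fun _ _ => u))⁻¹ *ᵥ
          Sum.elim x (fun _ => y)) =
      x ⬝ᵥ (A⁻¹ *ᵥ x) + (u - v ⬝ᵥ (A⁻¹ *ᵥ v))⁻¹ * (x ⬝ᵥ (A⁻¹ *ᵥ v) - y) ^ 2 := by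
  have hschur : (of fun _ _ => u : Matrix Unit Unit α) -
      (replicateCol Unit v)ᵀ * A⁻¹ * replicateCol Unit v = of fun _ _ => u - v ⬝ᵥ (A⁻¹ *ᵥ v) := by
    rw [transpose_replicateCol, Matrix.mul_assoc, ← replicateCol_mulVec,
      replicateRow_mul_replicateCol]
    rfl
  rw [← transpose_replicateCol, sumElim_dotProduct_inv_fromBlocks_mulVec hAsymm hA
    (by rw [hschur, det_unique]; exact hs.isUnit), hschur]
  have hresidual : (fun _ => y) - (replicateCol Unit v)ᵀ *ᵥ (A⁻¹ *ᵥ x) =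
      fun _ => y - x ⬝ᵥ (A⁻¹ *ᵥ v) := by
    rw [transpose_replicateCol, replicateRow_mulVec_eq_const, hAsymm.inv.dotProduct_mulVec_comm]
    rfl
  rw [hresidual, inv_subsingleton (of fun _ _ => _ : Matrix Unit Unit α)]
  simp only [of_apply, Ring.inverse_eq_inv', diagonal_const_mulVec, dotProduct_smul,
    dotProduct_pUnit, smul_eq_mul]
  ring

end Matrix

open Matrix

theorem trace_criterion_decrease_of_schur_neg (n C : ℕ)
    (A : Matrix (Fin n) (Fin n) ℝ) (hAsymm : A.IsSymm) (hA : IsUnit A.det)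
    (v : Fin n → ℝ) (u : ℝ)
    (B : Matrix (Fin n ⊕ Unit) (Fin n ⊕ Unit) ℝ)
    (hB : B = fromBlocks A (replicateCol Unit v) (replicateRow Unit v) (of fun _ _ => u))
    (a : Fin C → (Fin n → ℝ)) (b : Fin C → ℝ)
    (tR tRf : ℝ)
    (htR : tR = ∑ i, a i ⬝ᵥ (A⁻¹ *ᵥ a i))
    (htRf : tRf = ∑ i, (Sum.elim (a i) (fun _ => b i)) ⬝ᵥ
        (B⁻¹ *ᵥ (Sum.elim (a i) (fun _ => b i))))
    (hschur : u - v ⬝ᵥ (A⁻¹ *ᵥ v) < 0) :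
    tRf ≤ tR ∧ ((∃ i, a i ⬝ᵥ (A⁻¹ *ᵥ v) ≠ b i) → tRf < tR) := by
  set s := u - v ⬝ᵥ (A⁻¹ *ᵥ v)
  have htRf_eq : tRf = tR + s⁻¹ * ∑ i, (a i ⬝ᵥ (A⁻¹ *ᵥ v) - b i) ^ 2 := by
    rw [htRf, htR, hB, Finset.mul_sum, ← Finset.sum_add_distrib]
    exact Finset.sum_congr rfl fun i _ =>
      sumElim_dotProduct_inv_fromBlocks_replicateCol_mulVec hAsymm hA v u hschur.ne (a i) (b i)
  have hs_inv : s⁻¹ < 0 := inv_lt_zero.mpr hschur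
  have hsum_nonneg : 0 ≤ ∑ i, (a i ⬝ᵥ (A⁻¹ *ᵥ v) - b i) ^ 2 :=
    Finset.sum_nonneg fun i _ => sq_nonneg _
  refine ⟨?_, fun ⟨i, hi⟩ => ?_⟩
  · linarith [mul_nonpos_of_nonpos_of_nonneg hs_inv.le hsum_nonneg]
  · have hsum_pos : 0 < ∑ i, (a i ⬝ᵥ (A⁻¹ *ᵥ v) - b i) ^ 2 :=
      Finset.sum_pos' (fun j _ => sq_nonneg _)
        ⟨i, Finset.mem_univ i, pow_two_pos_of_ne_zero (sub_ne_zero.mpr hi)⟩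
    linarith [mul_neg_of_neg_of_pos hs_inv hsum_pos]
end

section
/- Let Y ∈ ℝ^m, let X be an m×p real matrix with XᵀX invertible, H = X (XᵀX)⁻¹ Xᵀ, let T be an m×q real matrix with Q = Tᵀ(I − H)T invertible and M = Q⁻¹, and let U = [X T] with Ŷ_U = U (UᵀU)⁻¹ Uᵀ Y and Ŷ_X = H Y. Then the residual sums of squares satisfy (Y − Ŷ_U)ᵀ(Y − Ŷ_U) = (Y − Ŷ_X)ᵀ(Y − Ŷ_X) − Yᵀ (I − H) T M Tᵀ (I − H) Y. -/
/-!
The column space of `U = [X T]` splits orthogonally into that of `X` and that of the residualised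
block `(I - H) T`, so the hat matrix of `U` is `H + (I - H) T M Tᵀ (I - H)`; this is read off from
the Schur-complement formula for `(UᵀU)⁻¹`. For a symmetric idempotent `P` the residual sum of
squares is `Yᵀ Y - Yᵀ P Y`, so the two SSEs differ by `Yᵀ (I - H) T M Tᵀ (I - H) Y`.
-/

namespace Matrix

variable {l m n R : Type*} [CommRing R]

theorem inv_fromBlocks₁₁_eq [Fintype m] [Fintype n] [DecidableEq m] [DecidableEq n]
    (A : Matrix m m R) (B : Matrix m n R) (C : Matrix n m R) (D : Matrix n n R)
    (hA : IsUnit A.det) (hS : IsUnit (D - C * A⁻¹ * B).det) :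
    (fromBlocks A B C D)⁻¹ =
      fromBlocks (A⁻¹ + A⁻¹ * B * (D - C * A⁻¹ * B)⁻¹ * C * A⁻¹)
        (-(A⁻¹ * B * (D - C * A⁻¹ * B)⁻¹)) (-((D - C * A⁻¹ * B)⁻¹ * C * A⁻¹))
        (D - C * A⁻¹ * B)⁻¹ := by
  let := invertibleOfIsUnitDet A hA
  have hAinv : ⅟A = A⁻¹ := invOf_eq_nonsing_inv A
  let : Invertible (D - C * ⅟A * B) := by rw [hAinv]; exact invertibleOfIsUnitDet _ hS
  let := fromBlocks₁₁Invertible A B C D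
  rw [← invOf_eq_nonsing_inv, invOf_fromBlocks₁₁_eq, invOf_eq_nonsing_inv (D - C * ⅟A * B),
    hAinv]

theorem isUnit_det_fromBlocks₁₁ [Fintype m] [Fintype n] [DecidableEq m] [DecidableEq n]
    {A : Matrix m m R} {B : Matrix m n R} {C : Matrix n m R} {D : Matrix n n R}
    (hA : IsUnit A.det) (hS : IsUnit (D - C * A⁻¹ * B).det) :
    IsUnit (fromBlocks A B C D).det := by
  let := invertibleOfIsUnitDet A hA
  rw [det_fromBlocks₁₁, invOf_eq_nonsing_inv]
  exact hA.mul hS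

theorem dotProduct_sub_mulVec_self_of_isSymm_of_isIdempotentElem [Fintype n] {P : Matrix n n R}
    (hsymm : P.IsSymm) (hidem : IsIdempotentElem P) (Y : n → R) :
    (Y - P *ᵥ Y) ⬝ᵥ (Y - P *ᵥ Y) = Y ⬝ᵥ Y - Y ⬝ᵥ (P *ᵥ Y) := by
  have hquad : (P *ᵥ Y) ⬝ᵥ (P *ᵥ Y) = Y ⬝ᵥ (P *ᵥ Y) := by
    calc (P *ᵥ Y) ⬝ᵥ (P *ᵥ Y) = (Y ᵥ* Pᵀ) ⬝ᵥ (P *ᵥ Y) := by rw [vecMul_transpose]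
      _ = Y ⬝ᵥ (P *ᵥ P *ᵥ Y) := by rw [hsymm.eq, ← dotProduct_mulVec]
      _ = Y ⬝ᵥ (P *ᵥ Y) := by rw [mulVec_mulVec, hidem.eq]
  rw [sub_dotProduct, dotProduct_sub, dotProduct_sub, hquad, dotProduct_comm (P *ᵥ Y)]
  ring

noncomputable def hatMatrix [Fintype m] [Fintype n] [DecidableEq n] (A : Matrix m n R) :
    Matrix m m R :=
  A * (Aᵀ * A)⁻¹ * Aᵀ

theorem hatMatrix_isSymm [Fintype m] [Fintype n] [DecidableEq n] (A : Matrix m n R) :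
    (hatMatrix A).IsSymm := by
  have hgram : ((Aᵀ * A)⁻¹)ᵀ = (Aᵀ * A)⁻¹ := by
    rw [transpose_nonsing_inv, transpose_mul, transpose_transpose]
  simp only [IsSymm, hatMatrix, transpose_mul, transpose_transpose, hgram, Matrix.mul_assoc]

theorem isIdempotentElem_hatMatrix [Fintype m] [Fintype n] [DecidableEq n] {A : Matrix m n R}
    (hA : IsUnit (Aᵀ * A).det) :
    IsIdempotentElem (hatMatrix A) := by
  calc hatMatrix A * hatMatrix A
      = A * ((Aᵀ * A)⁻¹ * (Aᵀ * A)) * ((Aᵀ * A)⁻¹ * Aᵀ) := by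
        simp only [hatMatrix, Matrix.mul_assoc]
    _ = hatMatrix A := by rw [nonsing_inv_mul _ hA, Matrix.mul_one, ← Matrix.mul_assoc]; rfl

theorem transpose_mul_one_sub_hatMatrix_mul [Fintype l] [Fintype m] [DecidableEq l]
    [DecidableEq m] (X : Matrix m l R) (T : Matrix m n R) :
    Tᵀ * (1 - hatMatrix X) * T = Tᵀ * T - Tᵀ * X * (Xᵀ * X)⁻¹ * (Xᵀ * T) := by
  simp only [hatMatrix, Matrix.mul_sub, Matrix.sub_mul, Matrix.mul_one, Matrix.mul_assoc]

theorem isUnit_det_transpose_fromCols_mul_fromCols [Fintype l] [Fintype m] [Fintype n]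
    [DecidableEq l] [DecidableEq m] [DecidableEq n]
    {X : Matrix m l R} {T : Matrix m n R} (hX : IsUnit (Xᵀ * X).det)
    (hQ : IsUnit (Tᵀ * (1 - hatMatrix X) * T).det) :
    IsUnit ((fromCols X T)ᵀ * fromCols X T).det := by
  rw [transpose_fromCols, fromRows_mul_fromCols]
  exact isUnit_det_fromBlocks₁₁ hX (transpose_mul_one_sub_hatMatrix_mul X T ▸ hQ)

theorem hatMatrix_fromCols [Fintype l] [Fintype m] [Fintype n]
    [DecidableEq l] [DecidableEq m] [DecidableEq n] {X : Matrix m l R} {T : Matrix m n R}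
    (hX : IsUnit (Xᵀ * X).det) (hQ : IsUnit (Tᵀ * (1 - hatMatrix X) * T).det) :
    hatMatrix (fromCols X T) = hatMatrix X +
      (1 - hatMatrix X) * T * (Tᵀ * (1 - hatMatrix X) * T)⁻¹ * Tᵀ * (1 - hatMatrix X) := by
  rw [transpose_mul_one_sub_hatMatrix_mul] at hQ ⊢
  rw [hatMatrix, transpose_fromCols, fromRows_mul_fromCols, inv_fromBlocks₁₁_eq _ _ _ _ hX hQ,
    fromCols_mul_fromBlocks, fromCols_mul_fromRows]
  simp only [hatMatrix, Matrix.mul_sub, Matrix.sub_mul, Matrix.mul_add, Matrix.add_mul,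
    Matrix.mul_neg, Matrix.neg_mul, Matrix.mul_one, Matrix.one_mul, Matrix.mul_assoc]
  abel

end Matrix

open Matrix

theorem sse_decomposition (m p q : ℕ)
    (Y : Fin m → ℝ)
    (X : Matrix (Fin m) (Fin p) ℝ) (hX : IsUnit (Xᵀ * X).det)
    (H : Matrix (Fin m) (Fin m) ℝ) (hH : H = X * (Xᵀ * X)⁻¹ * Xᵀ)
    (T : Matrix (Fin m) (Fin q) ℝ)
    (hQ : IsUnit (Tᵀ * (1 - H) * T).det)
    (M : Matrix (Fin q) (Fin q) ℝ) (hM : M = (Tᵀ * (1 - H) * T)⁻¹)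
    (U : Matrix (Fin m) (Fin p ⊕ Fin q) ℝ) (hU : U = fromCols X T)
    (YhatU YhatX : Fin m → ℝ)
    (hYU : YhatU = (U * (Uᵀ * U)⁻¹ * Uᵀ) *ᵥ Y)
    (hYX : YhatX = H *ᵥ Y) :
    (Y - YhatU) ⬝ᵥ (Y - YhatU)
      = (Y - YhatX) ⬝ᵥ (Y - YhatX)
        - Y ⬝ᵥ (((1 - H) * T * M * Tᵀ * (1 - H)) *ᵥ Y) := by
  change H = hatMatrix X at hH
  change YhatU = hatMatrix U *ᵥ Y at hYU
  subst hH hM hU hYU hYX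
  rw [dotProduct_sub_mulVec_self_of_isSymm_of_isIdempotentElem (hatMatrix_isSymm _)
      (isIdempotentElem_hatMatrix (isUnit_det_transpose_fromCols_mul_fromCols hX hQ)),
    dotProduct_sub_mulVec_self_of_isSymm_of_isIdempotentElem (hatMatrix_isSymm X)
      (isIdempotentElem_hatMatrix hX),
    hatMatrix_fromCols hX hQ, add_mulVec, dotProduct_add]
  ring
end

section
/- Let Y ∈ ℝ^m, let X be an m×p real matrix with XᵀX invertible, H = X (XᵀX)⁻¹ Xᵀ, let T be an m×q real matrix such that M = (TᵀT − TᵀX(XᵀX)⁻¹XᵀT)⁻¹ exists, and let U = [X T] be the m×(p+q) horizontal concatenation of X and T. Let MSE_X = (1/m)·(Y − HY)ᵀ(Y − HY) and MSE_U = (1/m)·(Y − U(UᵀU)⁻¹UᵀY)ᵀ(Y − U(UᵀU)⁻¹UᵀY) be the mean squared errors of the least-squares regressions of Y on X and on U respectively. Then MSE_U ≤ MSE_X. -/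
/-!
The least-squares fit on `U = [X T]` is the orthogonal projection of `Y` onto the column space of
`U`, so its residual is no longer than that of any other vector of that space. The fit `H Y` on
`X` alone is such a vector: it is `U z` for the coefficient vector `z` that gives the columns of
`T` weight zero. `UᵀU` is invertible because its determinant is `det (XᵀX)` times the
determinant of the Schur complement.
-/

open Matrix

theorem transpose_mulVec_sub_projection_mulVec {R m n : Type*} [CommRing R] [Fintype m]
    [Fintype n] [DecidableEq n] {A : Matrix m n R} (hA : IsUnit (Aᵀ * A).det) (y : m → R) :
    Aᵀ *ᵥ (y - (A * (Aᵀ * A)⁻¹ * Aᵀ) *ᵥ y) = 0 := by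
  rw [mulVec_sub, mulVec_mulVec, ← Matrix.mul_assoc, ← Matrix.mul_assoc,
    mul_nonsing_inv _ hA, Matrix.one_mul, sub_self]

theorem dotProduct_self_add_of_dotProduct_eq_zero {R m : Type*} [CommSemiring R] [Fintype m]
    {r s : m → R} (h : r ⬝ᵥ s = 0) :
    (r + s) ⬝ᵥ (r + s) = r ⬝ᵥ r + s ⬝ᵥ s := by
  rw [add_dotProduct, dotProduct_add, dotProduct_add, h, dotProduct_comm s r, h,
    add_zero, zero_add]

theorem dotProduct_self_sub_projection_mulVec_le {R m n : Type*} [CommRing R] [LinearOrder R]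
    [IsStrictOrderedRing R] [Fintype m] [Fintype n] [DecidableEq n] {A : Matrix m n R}
    (hA : IsUnit (Aᵀ * A).det) (y : m → R) (z : n → R) :
    (y - (A * (Aᵀ * A)⁻¹ * Aᵀ) *ᵥ y) ⬝ᵥ (y - (A * (Aᵀ * A)⁻¹ * Aᵀ) *ᵥ y) ≤
      (y - A *ᵥ z) ⬝ᵥ (y - A *ᵥ z) := by
  set r := y - (A * (Aᵀ * A)⁻¹ * Aᵀ) *ᵥ y
  set w := (Aᵀ * A)⁻¹ *ᵥ Aᵀ *ᵥ y - z
  have hsplit : y - A *ᵥ z = r + A *ᵥ w := by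
    simp only [r, w, mulVec_sub, mulVec_mulVec, Matrix.mul_assoc]
    abel
  have horth : r ⬝ᵥ A *ᵥ w = 0 := by
    rw [dotProduct_mulVec, ← mulVec_transpose, transpose_mulVec_sub_projection_mulVec hA,
      zero_dotProduct]
  rw [hsplit, dotProduct_self_add_of_dotProduct_eq_zero horth, le_add_iff_nonneg_right]
  exact Fintype.sum_nonneg fun _ => mul_self_nonneg _

theorem isUnit_det_transpose_fromCols_mul_fromCols {R m n₁ n₂ : Type*} [CommRing R] [Fintype m]
    [Fintype n₁] [Fintype n₂] [DecidableEq n₁] [DecidableEq n₂]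
    {A : Matrix m n₁ R} {B : Matrix m n₂ R} (hA : IsUnit (Aᵀ * A).det)
    (hS : IsUnit (Bᵀ * B - Bᵀ * A * (Aᵀ * A)⁻¹ * Aᵀ * B).det) :
    IsUnit ((fromCols A B)ᵀ * fromCols A B).det := by
  have := invertibleOfIsUnitDet _ hA
  rw [transpose_fromCols, fromRows_mul_fromCols, det_fromBlocks₁₁, invOf_eq_nonsing_inv]
  refine hA.mul ?_
  simpa only [Matrix.mul_assoc] using hS

theorem mse_le_of_adding_features (m p q : ℕ)
    (Y : Fin m → ℝ)
    (X : Matrix (Fin m) (Fin p) ℝ) (hX : IsUnit (Xᵀ * X).det)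
    (H : Matrix (Fin m) (Fin m) ℝ) (hH : H = X * (Xᵀ * X)⁻¹ * Xᵀ)
    (T : Matrix (Fin m) (Fin q) ℝ)
    (hQ : IsUnit (Tᵀ * T - Tᵀ * X * (Xᵀ * X)⁻¹ * Xᵀ * T).det)
    (U : Matrix (Fin m) (Fin p ⊕ Fin q) ℝ) (hU : U = fromCols X T)
    (MSE_X MSE_U : ℝ)
    (hMSEX : MSE_X = (1 / (m : ℝ)) * ((Y - H *ᵥ Y) ⬝ᵥ (Y - H *ᵥ Y)))
    (hMSEU : MSE_U = (1 / (m : ℝ)) *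
      ((Y - (U * (Uᵀ * U)⁻¹ * Uᵀ) *ᵥ Y) ⬝ᵥ (Y - (U * (Uᵀ * U)⁻¹ * Uᵀ) *ᵥ Y))) :
    MSE_U ≤ MSE_X := by
  have hUU : IsUnit (Uᵀ * U).det := hU ▸ isUnit_det_transpose_fromCols_mul_fromCols hX hQ
  have hfit : H *ᵥ Y = U *ᵥ Sum.elim ((Xᵀ * X)⁻¹ *ᵥ Xᵀ *ᵥ Y) 0 := by
    rw [hU, hH, fromCols_mulVec_sumElim, mulVec_zero, add_zero, mulVec_mulVec, mulVec_mulVec,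
      Matrix.mul_assoc]
  rw [hMSEU, hMSEX, hfit]
  exact mul_le_mul_of_nonneg_left (dotProduct_self_sub_projection_mulVec_le hUU Y _)
    (by positivity)
end
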